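/- Let Ω ⊂ ℝⁿ be a bounded domain and let u ∈ C²(Ω) ∩ C⁰(closure Ω) with u > 0 in Ω be such that A[u] is positive definite in Ω (i.e. the graph of u is locally strictly convex in ℍⁿ⁺¹). (i) If the function h(x) = u(x)√(1+|Du(x)|²) attains a local maximum at an interior point x₀ ∈ Ω, then Du(x₀) = 0, and hence h(x₀) = u(x₀) ≤ sup_Ω u. (ii) Consequently, if the supremum of h over the closure of Ω is attained at an interior point of Ω, then ν^{n+1} = 1/√(1+|Du|²) ≥ u/ sup_Ω u at every point of Ω. -/

import Mathlib

open scoped Topology NNReal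
open Filter Set

noncomputable section

/-- Euclidean `n`-space. -/
abbrev En (n : ℕ) := EuclideanSpace ℝ (Fin n)

/-- The positive cone `K⁺ₙ`. -/
def posCone (n : ℕ) : Set (Fin n → ℝ) := {l | ∀ i, 0 < l i}

/-- A curvature function on the positive cone. -/
structure IsCurvatureFunction (n : ℕ) (f : (Fin n → ℝ) → ℝ) : Prop where
  smooth : ContDiffOn ℝ (⊤ : ℕ∞) f (posCone n)
  symm : ∀ (g : Equiv.Perm (Fin n)) (l : Fin n → ℝ), f (l ∘ g) = f l
  pos : ∀ l ∈ posCone n, 0 < f l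
  zero_at_boundary : ∀ l₀ ∈ frontier (posCone n), Tendsto f (𝓝[posCone n] l₀) (𝓝 0)
  deriv_pos : ∀ l ∈ posCone n, ∀ i : Fin n, 0 < fderiv ℝ f l (Pi.single i 1)
  concave : ConcaveOn ℝ (posCone n) f
  normalized : f (fun _ => 1) = 1
  homog : ∀ t : ℝ, 0 ≤ t → ∀ l ∈ posCone n, f (t • l) = t * f l

variable {n : ℕ}

/-- Gradient `Du` (components). -/
def Dg (u : En n → ℝ) (x : En n) : Fin n → ℝ :=
  fun i => fderiv ℝ u x (EuclideanSpace.single i 1)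

/-- Hessian matrix `D²u`. -/
def Dh (u : En n → ℝ) (x : En n) : Matrix (Fin n) (Fin n) ℝ :=
  Matrix.of fun i j =>
    fderiv ℝ (fun y => fderiv ℝ u y (EuclideanSpace.single j 1)) x (EuclideanSpace.single i 1)

/-- `w = √(1+|Du|²)`. -/
def wG (u : En n → ℝ) (x : En n) : ℝ := Real.sqrt (1 + ∑ i, Dg u x i ^ 2)

/-- The matrix `γ = (γ^{ij})`, the inverse square root of `I + Du Duᵀ`. -/
def gammaM (u : En n → ℝ) (x : En n) : Matrix (Fin n) (Fin n) ℝ :=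
  1 - (wG u x * (1 + wG u x))⁻¹ • Matrix.of (fun i j => Dg u x i * Dg u x j)

/-- The matrix `A[u]` whose eigenvalues are the hyperbolic principal curvatures of
the graph of `u`. -/
def hypA (u : En n → ℝ) (x : En n) : Matrix (Fin n) (Fin n) ℝ :=
  (wG u x)⁻¹ • (1 + u x • (gammaM u x * Dh u x * gammaM u x))

open Classical in
/-- Eigenvalues of a (symmetric) real matrix; junk value `0` if not symmetric. -/
def eigenvals {n : ℕ} (A : Matrix (Fin n) (Fin n) ℝ) : Fin n → ℝ :=
  if h : A.IsHermitian then h.eigenvalues else 0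

/-- A solution of the asymptotic Plateau problem `f(κ) = σ` over `Ω`. -/
structure IsAPSolution (n : ℕ) (f : (Fin n → ℝ) → ℝ) (Ω : Set (En n)) (σ : ℝ)
    (u : En n → ℝ) : Prop where
  smooth : ContDiffOn ℝ (⊤ : ℕ∞) u Ω
  cont : ContinuousOn u (closure Ω)
  pos : ∀ x ∈ Ω, 0 < u x
  bd : ∀ x ∈ frontier Ω, u x = 0
  posdef : ∀ x ∈ Ω, (hypA u x).PosDef
  curv_eq : ∀ x ∈ Ω, f (eigenvals (hypA u x)) = σ

section Extras

variable {n : ℕ}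

/-- Uniform exterior ball condition with radius `r`. -/
def UnifExtBall (Ω : Set (En n)) (r : ℝ) : Prop :=
  ∀ p ∈ frontier Ω, ∃ c : En n, Metric.ball c r ∩ Ω = ∅ ∧ dist p c = r

/-- Uniform interior ball condition with radius `r`. -/
def UnifIntBall (Ω : Set (En n)) (r : ℝ) : Prop :=
  ∀ p ∈ frontier Ω, ∃ c : En n, Metric.ball c r ⊆ Ω ∧ dist p c = r

/-- `ν` is the outward unit normal to `∂Ω` at `p`: near `p`, after writing points as
`p + v + tν` with `v` in the tangent hyperplane, `Ω` is the region `t < -φ(v)` for a `C¹`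
function `φ` with `φ(0) = 0`, `Dφ(0) = 0`. -/
def IsOutwardNormalAt (Ω : Set (En n)) (p ν : En n) : Prop :=
  ‖ν‖ = 1 ∧ ∃ r : ℝ, 0 < r ∧ ∃ φ : ↥((Submodule.span ℝ {ν})ᗮ) → ℝ,
    φ 0 = 0 ∧ fderiv ℝ φ 0 = 0 ∧ ContDiffOn ℝ 1 φ (Metric.ball 0 r) ∧
    ∀ y ∈ Metric.ball p r,
      (y ∈ Ω ↔ @inner ℝ _ _ (y - p) ν
          < - φ ((Submodule.orthogonalProjectionOnto ((Submodule.span ℝ {ν})ᗮ)) (y - p)))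

/-- `Ω` has `C¹` boundary. -/
def HasC1Boundary (Ω : Set (En n)) : Prop :=
  ∀ p ∈ frontier Ω, ∃ ν : En n, IsOutwardNormalAt Ω p ν

/-- `Ω` has `C²` boundary: near every boundary point `p`, `Ω` is the region above the graph
of a `C²` function `φ` over the tangent hyperplane, where `ν` is the interior unit normal. -/
def HasC2Boundary (Ω : Set (En n)) : Prop :=
  ∀ p ∈ frontier Ω, ∃ ν : En n, ‖ν‖ = 1 ∧ ∃ r : ℝ, 0 < r ∧
    ∃ φ : ↥((Submodule.span ℝ {ν})ᗮ) → ℝ,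
      φ 0 = 0 ∧ fderiv ℝ φ 0 = 0 ∧ ContDiffOn ℝ 2 φ (Metric.ball 0 r) ∧
      ∀ y ∈ Metric.ball p r,
        (y ∈ Ω ↔ φ ((Submodule.orthogonalProjectionOnto ((Submodule.span ℝ {ν})ᗮ)) (y - p))
            < @inner ℝ _ _ (y - p) ν)

/-- `Ω` has `C^{2,α}` boundary: as `HasC2Boundary`, and additionally the second derivative of
the graph function is Hölder continuous of some exponent `α ∈ (0,1]`. -/
def HasC2alphaBoundary (Ω : Set (En n)) : Prop :=
  ∀ p ∈ frontier Ω, ∃ ν : En n, ‖ν‖ = 1 ∧ ∃ r : ℝ, 0 < r ∧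
    ∃ φ : ↥((Submodule.span ℝ {ν})ᗮ) → ℝ,
      φ 0 = 0 ∧ fderiv ℝ φ 0 = 0 ∧ ContDiffOn ℝ 2 φ (Metric.ball 0 r) ∧
      (∃ α C : ℝ≥0, 0 < α ∧ α ≤ 1 ∧
        letI : NormedAddCommGroup (↥((Submodule.span ℝ {ν})ᗮ) →L[ℝ] ↥((Submodule.span ℝ {ν})ᗮ) →L[ℝ] ℝ) :=
          @ContinuousLinearMap.toNormedAddCommGroup ℝ ℝ ↥((Submodule.span ℝ {ν})ᗮ)
            (↥((Submodule.span ℝ {ν})ᗮ) →L[ℝ] ℝ) _ _ _ _ _ _ (RingHom.id ℝ) _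
        HolderOnWith C α (fun v => fderiv ℝ (fun z => fderiv ℝ φ z) v) (Metric.ball 0 r)) ∧
      ∀ y ∈ Metric.ball p r,
        (y ∈ Ω ↔ φ ((Submodule.orthogonalProjectionOnto ((Submodule.span ℝ {ν})ᗮ)) (y - p))
            < @inner ℝ _ _ (y - p) ν)

/-- `Ω` is a mean convex domain with `C^{2,α}` boundary: near every boundary point, `Ω` is the
region above the graph of a `C^{2,α}` function `φ` over the tangent hyperplane (`ν` being the
interior unit normal, `Dφ(0) = 0`), with `Δφ(0) ≥ 0`. -/
def IsMeanConvexC2alphaDomain (Ω : Set (En n)) : Prop :=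
  ∀ p ∈ frontier Ω, ∃ ν : En n, ‖ν‖ = 1 ∧ ∃ r : ℝ, 0 < r ∧
    ∃ φ : ↥((Submodule.span ℝ {ν})ᗮ) → ℝ,
      φ 0 = 0 ∧ fderiv ℝ φ 0 = 0 ∧ ContDiffOn ℝ 2 φ (Metric.ball 0 r) ∧
      (∃ α C : ℝ≥0, 0 < α ∧ α ≤ 1 ∧
        letI : NormedAddCommGroup (↥((Submodule.span ℝ {ν})ᗮ) →L[ℝ] ↥((Submodule.span ℝ {ν})ᗮ) →L[ℝ] ℝ) :=
          @ContinuousLinearMap.toNormedAddCommGroup ℝ ℝ ↥((Submodule.span ℝ {ν})ᗮ)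
            (↥((Submodule.span ℝ {ν})ᗮ) →L[ℝ] ℝ) _ _ _ _ _ _ (RingHom.id ℝ) _
        HolderOnWith C α (fun v => fderiv ℝ (fun z => fderiv ℝ φ z) v) (Metric.ball 0 r)) ∧
      (∀ y ∈ Metric.ball p r,
        (y ∈ Ω ↔ φ ((Submodule.orthogonalProjectionOnto ((Submodule.span ℝ {ν})ᗮ)) (y - p))
            < @inner ℝ _ _ (y - p) ν)) ∧
      (∃ b : OrthonormalBasis (Fin (n - 1)) ℝ ↥((Submodule.span ℝ {ν})ᗮ),
        0 ≤ ∑ i, fderiv ℝ (fun z => fderiv ℝ φ z (b i)) 0 (b i))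

/-- Gradient with respect to a set (`fderivWithin`), used for derivatives up to the boundary. -/
def DgW (s : Set (En n)) (u : En n → ℝ) (x : En n) : Fin n → ℝ :=
  fun i => fderivWithin ℝ u s x (EuclideanSpace.single i 1)

end Extras
section DeSitter

variable {n : ℕ}

/-- `w = √(1−|Dv|²)` for a spacelike graph. -/
def wDS (v : En n → ℝ) (x : En n) : ℝ := Real.sqrt (1 - ∑ i, Dg v x i ^ 2)

/-- The matrix `Dv Dvᵀ`. -/
def dyad (v : En n → ℝ) (x : En n) : Matrix (Fin n) (Fin n) ℝ :=
  Matrix.of fun i j => Dg v x i * Dg v x j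

/-- Induced (de Sitter) metric of the spacelike graph of `v`. -/
def gDS (v : En n → ℝ) (x : En n) : Matrix (Fin n) (Fin n) ℝ :=
  (v x ^ 2)⁻¹ • (1 - dyad v x)

/-- Second fundamental form of the spacelike graph of `v`. -/
def hDS (v : En n → ℝ) (x : En n) : Matrix (Fin n) (Fin n) ℝ :=
  (v x ^ 2 * wDS v x)⁻¹ • (1 - dyad v x - v x • Dh v x)

open Classical in
/-- `g^{-1/2} h g^{-1/2}`, whose eigenvalues are the de Sitter principal curvatures
of the spacelike graph of `v` (junk value `0` if `g` is not positive semidefinite). -/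
def ADS (v : En n → ℝ) (x : En n) : Matrix (Fin n) (Fin n) ℝ :=
  if hg : (gDS v x).PosSemidef then
    (hg.1.eigenvectorUnitary.1 * Matrix.diagonal (Real.sqrt ∘ hg.1.eigenvalues) *
      (star hg.1.eigenvectorUnitary : Matrix (Fin n) (Fin n) ℝ))⁻¹ * hDS v x *
    (hg.1.eigenvectorUnitary.1 * Matrix.diagonal (Real.sqrt ∘ hg.1.eigenvalues) *
      (star hg.1.eigenvectorUnitary : Matrix (Fin n) (Fin n) ℝ))⁻¹ else 0

/-- The normalized `k`-th elementary symmetric function `H_k = e_k / C(n,k)`. -/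
def Hk (n k : ℕ) (l : Fin n → ℝ) : ℝ :=
  (∑ s ∈ Finset.powersetCard k (Finset.univ : Finset (Fin n)), ∏ i ∈ s, l i) / (n.choose k)

end DeSitter
end

/-!
At a critical point of `h = u w`, with `w = √(1 + |Du|²)` and `Dw = D²u Du / w`, one has
`w Du + (u / w) D²u Du = 0`; pairing with `Du` gives `w² |Du|² + u ⟨D²u Du, Du⟩ = 0`.
Since `γ Du = Du / w`, the quadratic form of `A[u]` at `Du` is `w⁻³` times exactly this
quantity, so positive definiteness of `A[u]` forces `Du = 0`, i.e. `h = u` there. If `h` attains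
its supremum at `x₀`, then `u w ≤ h(x₀) = u(x₀) ≤ sup u` everywhere, which is part (ii).
-/

section GraphOfFunction

open Matrix

variable {n : ℕ}

lemma sq_wG (u : En n → ℝ) (x : En n) : wG u x ^ 2 = 1 + Dg u x ⬝ᵥ Dg u x := by
  rw [wG, Real.sq_sqrt (by positivity)]
  simp only [dotProduct, sq]

lemma wG_pos (u : En n → ℝ) (x : En n) : 0 < wG u x :=
  Real.sqrt_pos.2 (by positivity)

lemma wG_eq_one_of_Dg_eq_zero {u : En n → ℝ} {x : En n} (h : Dg u x = 0) : wG u x = 1 := by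
  simp [wG, h]

lemma gammaM_transpose (u : En n → ℝ) (x : En n) : (gammaM u x)ᵀ = gammaM u x := by
  rw [gammaM, transpose_sub, transpose_one, transpose_smul]
  congr 2
  ext i j
  exact mul_comm _ _

/-- `1 - |Du|² / (w (1 + w)) = 1 - (w - 1) / w = 1 / w`, as `|Du|² = (w - 1)(w + 1)`. -/
lemma gammaM_mulVec_Dg (u : En n → ℝ) (x : En n) :
    gammaM u x *ᵥ Dg u x = (wG u x)⁻¹ • Dg u x := by
  set g := Dg u x
  set w := wG u x
  have hw : 0 < w := wG_pos u x
  have hgg : g ⬝ᵥ g = w ^ 2 - 1 := by linarith [sq_wG u x]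
  have hdyad : (of fun i j => g i * g j) *ᵥ g = (g ⬝ᵥ g) • g := by
    ext i
    simp only [mulVec, dotProduct, of_apply, Pi.smul_apply, smul_eq_mul, Finset.sum_mul]
    exact Finset.sum_congr rfl fun j _ => by ring
  have hcoef : 1 - (w * (1 + w))⁻¹ * (g ⬝ᵥ g) = w⁻¹ := by
    rw [hgg]
    field_simp
    ring
  rw [gammaM, sub_mulVec, one_mulVec, smul_mulVec, hdyad, smul_smul, ← hcoef, sub_smul,
    one_smul]

lemma Dg_dotProduct_hypA_mulVec_Dg (u : En n → ℝ) (x : En n) :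
    Dg u x ⬝ᵥ (hypA u x *ᵥ Dg u x) =
      (wG u x ^ 3)⁻¹ *
        (wG u x ^ 2 * (Dg u x ⬝ᵥ Dg u x) + u x * (Dg u x ⬝ᵥ (Dh u x *ᵥ Dg u x))) := by
  have hw : wG u x ≠ 0 := (wG_pos u x).ne'
  have hγ' : Dg u x ᵥ* gammaM u x = (wG u x)⁻¹ • Dg u x := by
    rw [← mulVec_transpose, gammaM_transpose, gammaM_mulVec_Dg]
  have hquad : Dg u x ⬝ᵥ ((gammaM u x * Dh u x * gammaM u x) *ᵥ Dg u x) =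
      (wG u x)⁻¹ * (wG u x)⁻¹ * (Dg u x ⬝ᵥ (Dh u x *ᵥ Dg u x)) := by
    rw [← mulVec_mulVec, gammaM_mulVec_Dg, dotProduct_mulVec, ← vecMul_vecMul, hγ',
      ← dotProduct_mulVec, mulVec_smul, smul_dotProduct, dotProduct_smul, smul_eq_mul,
      smul_eq_mul, mul_assoc]
  rw [hypA, smul_mulVec, add_mulVec, one_mulVec, smul_mulVec, dotProduct_smul, dotProduct_add,
    dotProduct_smul, hquad, smul_eq_mul, smul_eq_mul]
  field_simp

end GraphOfFunction

section FirstVariation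

open Matrix

variable {n : ℕ} {u : En n → ℝ} {x : En n}

lemma hasFDerivAt_Dg (hu : ContDiffAt ℝ 2 u x) (i : Fin n) :
    HasFDerivAt (fun y => Dg u y i) (fderiv ℝ (fun y => Dg u y i) x) x := by
  have hDu : DifferentiableAt ℝ (fderiv ℝ u) x :=
    (hu.fderiv_right (m := 1) (by norm_num)).differentiableAt one_ne_zero
  exact (((ContinuousLinearMap.apply ℝ ℝ (EuclideanSpace.single i 1)).differentiableAt).comp
    x hDu).hasFDerivAt

lemma hasFDerivAt_wG (hu : ContDiffAt ℝ 2 u x) :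
    HasFDerivAt (wG u) ((wG u x)⁻¹ • ∑ i, Dg u x i • fderiv ℝ (fun y => Dg u y i) x) x := by
  have hsq : HasFDerivAt (fun y => 1 + ∑ i, Dg u y i ^ 2)
      (∑ i, (2 * Dg u x i) • fderiv ℝ (fun y => Dg u y i) x) x :=
    (HasFDerivAt.fun_sum fun i _ => ((hasFDerivAt_Dg hu i).pow 2).congr_fderiv
      (by simp)).const_add 1
  refine (hsq.sqrt (by positivity)).congr_fderiv ?_
  rw [← wG, Finset.smul_sum, Finset.smul_sum]
  refine Finset.sum_congr rfl fun i _ => ?_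
  rw [smul_smul, smul_smul]
  field_simp

lemma wG_smul_Dg_add_eq_zero_of_isLocalMax (hu : ContDiffAt ℝ 2 u x)
    (hmax : IsLocalMax (fun y => u y * wG u y) x) :
    wG u x • Dg u x + (u x / wG u x) • (Dh u x *ᵥ Dg u x) = 0 := by
  have hprod := (hu.differentiableAt (by norm_num)).hasFDerivAt.mul (hasFDerivAt_wG hu)
  have hzero := hmax.hasFDerivAt_eq_zero hprod
  ext j
  have hj := congrArg (fun L => L (EuclideanSpace.single j 1)) hzero
  simp only [_root_.add_apply, _root_.smul_apply, _root_.sum_apply, smul_eq_mul,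
    _root_.zero_apply] at hj
  have hHess : (Dh u x *ᵥ Dg u x) j =
      ∑ i, Dg u x i * fderiv ℝ (fun y => Dg u y i) x (EuclideanSpace.single j 1) := by
    simp only [mulVec, dotProduct]
    exact Finset.sum_congr rfl fun i _ => mul_comm _ _
  change wG u x * Dg u x j + u x / wG u x * (Dh u x *ᵥ Dg u x) j = 0
  rw [hHess, div_eq_mul_inv, mul_assoc]
  exact (add_comm _ _).trans hj

theorem Dg_eq_zero_of_isLocalMax (hu : ContDiffAt ℝ 2 u x) (hA : (hypA u x).PosDef)
    (hmax : IsLocalMax (fun y => u y * wG u y) x) : Dg u x = 0 := by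
  by_contra hg
  have hw : wG u x ≠ 0 := (wG_pos u x).ne'
  have hpos := hA.dotProduct_mulVec_pos hg
  rw [star_trivial, Dg_dotProduct_hypA_mulVec_Dg] at hpos
  have hcrit := congrArg (Dg u x ⬝ᵥ ·) (wG_smul_Dg_add_eq_zero_of_isLocalMax hu hmax)
  simp only [dotProduct_add, dotProduct_smul, smul_eq_mul, dotProduct_zero] at hcrit
  have hsplit : wG u x ^ 2 * (Dg u x ⬝ᵥ Dg u x) + u x * (Dg u x ⬝ᵥ (Dh u x *ᵥ Dg u x)) =
      wG u x * (wG u x * (Dg u x ⬝ᵥ Dg u x) + u x / wG u x * (Dg u x ⬝ᵥ (Dh u x *ᵥ Dg u x))) := by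
    field_simp
  rw [hsplit, hcrit, mul_zero, mul_zero] at hpos
  exact hpos.false

end FirstVariation

theorem stmt_12_general (n : ℕ)
    (Ω : Set (En n)) (hΩo : IsOpen Ω)
    (hΩb : Bornology.IsBounded Ω)
    (u : En n → ℝ) (hu2 : ContDiffOn ℝ 2 u Ω) (huc : ContinuousOn u (closure Ω))
    (hupos : ∀ x ∈ Ω, 0 < u x) (hupd : ∀ x ∈ Ω, (hypA u x).PosDef) :
    (∀ x₀ ∈ Ω, IsLocalMax (fun x => u x * wG u x) x₀ →
      (∀ i, Dg u x₀ i = 0) ∧ u x₀ * wG u x₀ = u x₀ ∧ u x₀ ≤ sSup (u '' Ω)) ∧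
    ((∃ x₀ ∈ Ω, ∀ y ∈ Ω, u y * wG u y ≤ u x₀ * wG u x₀) →
      ∀ x ∈ Ω, u x / sSup (u '' Ω) ≤ (wG u x)⁻¹) := by
  have hbdd : BddAbove (u '' Ω) :=
    ((hΩb.isCompact_closure.image_of_continuousOn huc).bddAbove).mono
      (image_mono subset_closure)
  have hcrit : ∀ x₀ ∈ Ω, IsLocalMax (fun x => u x * wG u x) x₀ →
      (∀ i, Dg u x₀ i = 0) ∧ u x₀ * wG u x₀ = u x₀ ∧ u x₀ ≤ sSup (u '' Ω) := by
    intro x₀ hx₀ hmax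
    have hDu := Dg_eq_zero_of_isLocalMax (hu2.contDiffAt (hΩo.mem_nhds hx₀)) (hupd x₀ hx₀) hmax
    exact ⟨congrFun hDu, by rw [wG_eq_one_of_Dg_eq_zero hDu, mul_one],
      le_csSup hbdd (mem_image_of_mem u hx₀)⟩
  refine ⟨hcrit, ?_⟩
  rintro ⟨x₀, hx₀, hglobal⟩ x hx
  obtain ⟨-, hh₀, hsup⟩ := hcrit x₀ hx₀ (Filter.mem_of_superset (hΩo.mem_nhds hx₀) hglobal)
  have hS : 0 < sSup (u '' Ω) := (hupos x₀ hx₀).trans_le hsup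
  rw [div_le_iff₀ hS, ← div_eq_inv_mul, le_div_iff₀ (wG_pos u x)]
  calc u x * wG u x ≤ u x₀ * wG u x₀ := hglobal x hx
    _ = u x₀ := hh₀
    _ ≤ sSup (u '' Ω) := hsup

/-- **Proposition 2.2**: for a locally strictly convex graph, (i) at an interior local maximum
`x₀` of `h = u√(1+|Du|²)` one has `Du(x₀) = 0`, hence `h(x₀) = u(x₀) ≤ sup_Ω u`; (ii) if the
supremum of `h` is attained at an interior point, then `ν^{n+1} ≥ u / sup_Ω u` throughout. -/
theorem stmt_12 (n : ℕ)
    (Ω : Set (En n)) (hΩo : IsOpen Ω) (hΩconn : IsConnected Ω)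
    (hΩb : Bornology.IsBounded Ω)
    (u : En n → ℝ) (hu2 : ContDiffOn ℝ 2 u Ω) (huc : ContinuousOn u (closure Ω))
    (hupos : ∀ x ∈ Ω, 0 < u x) (hupd : ∀ x ∈ Ω, (hypA u x).PosDef) :
    (∀ x₀ ∈ Ω, IsLocalMax (fun x => u x * wG u x) x₀ →
      (∀ i, Dg u x₀ i = 0) ∧ u x₀ * wG u x₀ = u x₀ ∧ u x₀ ≤ sSup (u '' Ω)) ∧
    ((∃ x₀ ∈ Ω, ∀ y ∈ Ω, u y * wG u y ≤ u x₀ * wG u x₀) →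
      ∀ x ∈ Ω, u x / sSup (u '' Ω) ≤ (wG u x)⁻¹) :=
  stmt_12_general n Ω hΩo hΩb u hu2 huc hupos hupd
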